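/- Let p be a prime, k a field of characteristic p, and α, a, b ∈ k elements satisfying a + b^p = 1 and a·b = α. Then in k[t, x] one has the polynomial identity (x^p + b x)^p + a·(x^p + b x) + t = x^{p²} + x^p + t + α x. Consequently, for f(t,x) = x^{p²} + x^p + t ∈ F_p[t,x], which is indecomposable in F̄_p[t,x], the polynomial f(t + αx, x) = x^{p²} + x^p + t + αx is decomposable as a one-variable polynomial in x over an algebraic closure of F_p(α, t). -/
import Mathlib


open Polynomial

/-- A multivariable polynomial over a field is indecomposable if it is non-constant and
cannot be written as `u(g)` with `u` a one-variable polynomial of degree at least 2. -/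
def MvIndecomposable {σ K : Type*} [Field K] (f : MvPolynomial σ K) : Prop :=
  0 < f.totalDegree ∧
    ¬ ∃ (u : Polynomial K) (g : MvPolynomial σ K),
        2 ≤ u.natDegree ∧ f = Polynomial.eval₂ MvPolynomial.C g u

/-- The polynomial `f(t,x) = x^{p²} + x^p + t` over `F_p`; the variable `false` is `t` and
`true` is `x`. -/
noncomputable def schinzelExample (p : ℕ) [Fact p.Prime] : MvPolynomial Bool (ZMod p) :=
  MvPolynomial.X true ^ (p ^ 2) + MvPolynomial.X true ^ p + MvPolynomial.X false

/-- `\overline{F_p(α,t)}`: an algebraic closure of `F_p(α,t)`; the variable `false` is `α` and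
`true` is `t`. -/
abbrev FpAlphaTClosure (p : ℕ) [Fact p.Prime] : Type :=
  AlgebraicClosure (FractionRing (MvPolynomial Bool (ZMod p)))

/-- The canonical map `F_p[α,t] → \overline{F_p(α,t)}`. -/
noncomputable def toFpAlphaTClosure (p : ℕ) [Fact p.Prime] :
    MvPolynomial Bool (ZMod p) →+* FpAlphaTClosure p :=
  algebraMap (MvPolynomial Bool (ZMod p)) (FpAlphaTClosure p)

/-- For `f(t,x) ∈ F_p[t,x]`, the one-variable polynomial `f(t + αx, x)` with coefficients in
`\overline{F_p(α,t)}`. -/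
noncomputable def substFp (p : ℕ) [Fact p.Prime] (f : MvPolynomial Bool (ZMod p)) :
    Polynomial (FpAlphaTClosure p) :=
  MvPolynomial.eval₂ (Polynomial.C.comp ((toFpAlphaTClosure p).comp MvPolynomial.C))
    (fun i => match i with
      | false =>
          Polynomial.C (toFpAlphaTClosure p (MvPolynomial.X true)) +
            Polynomial.C (toFpAlphaTClosure p (MvPolynomial.X false)) * Polynomial.X
      | true => Polynomial.X)
    f

/-- The key algebraic identity: in any commutative ring of characteristic `p`, if
`a + b^p = 1` and `a·b = α`, then `(x^p + bx)^p + a(x^p + bx) + t = x^{p²} + x^p + t + αx`. -/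
lemma key_identity {R : Type*} [CommRing R] {p : ℕ} [hp : Fact p.Prime] [CharP R p]
    (a b α x t : R) (hab : a + b ^ p = 1) (hmul : a * b = α) :
    (x ^ p + b * x) ^ p + a * (x ^ p + b * x) + t = x ^ p ^ 2 + x ^ p + t + α * x := by
  have h1 : (x ^ p + b * x) ^ p = x ^ p ^ 2 + b ^ p * x ^ p := by
    rw [add_pow_char, mul_pow, ← pow_mul, ← pow_two]
  rw [h1]
  linear_combination x ^ p * hab + x * hmul

/-- Indecomposability of `x^{p²} + x^p + t` over the algebraic closure of `F_p`. -/
lemma schinzel_indecomposable (p : ℕ) [hp : Fact p.Prime] :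
    MvIndecomposable
      (MvPolynomial.map (algebraMap (ZMod p) (AlgebraicClosure (ZMod p)))
        (schinzelExample p)) := by
  set K := AlgebraicClosure (ZMod p)
  set F := MvPolynomial.map (algebraMap (ZMod p) K) (schinzelExample p) with hFdef
  have hp0 : p ≠ 0 := hp.out.ne_zero
  have hp2 : 2 ≤ p := hp.out.two_le
  have hF : F = MvPolynomial.X true ^ p ^ 2 + MvPolynomial.X true ^ p +
      MvPolynomial.X false := by
    simp [hFdef, schinzelExample]
  set ψ : MvPolynomial Bool K →+* Polynomial (Polynomial K) :=
    MvPolynomial.eval₂Hom (Polynomial.C.comp Polynomial.C)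
      (fun i => if i then Polynomial.C Polynomial.X else Polynomial.X) with hψdef
  have h2 : ψ F = Polynomial.C (Polynomial.X ^ p ^ 2 + Polynomial.X ^ p) + Polynomial.X := by
    rw [hF]
    simp only [map_add, map_pow, MvPolynomial.eval₂Hom_X', hψdef, if_true, if_false,
      Bool.false_eq_true, ite_false, ite_true]
  have hψF : (ψ F).natDegree = 1 := by
    rw [h2, natDegree_add_eq_right_of_natDegree_lt
      (by rw [natDegree_C, natDegree_X]; norm_num), natDegree_X]
  constructor
  · have hsupp : (Finsupp.single false 1) ∈ F.support := by
      rw [MvPolynomial.mem_support_iff, hF]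
      simp [MvPolynomial.coeff_X_pow, MvPolynomial.coeff_X', Finsupp.single_eq_single_iff,
        hp0, pow_eq_zero_iff]
    have hle := MvPolynomial.le_totalDegree hsupp
    simp [Finsupp.sum_single_index] at hle
    omega
  · rintro ⟨u, g, hu, hfg⟩
    have hcomp : (ψ : MvPolynomial Bool K →+* Polynomial (Polynomial K)).comp MvPolynomial.C
        = Polynomial.C.comp Polynomial.C := by
      ext r
      · simp [hψdef]
    have h3 : ψ F = (u.map Polynomial.C).comp (ψ g) := by
      rw [hfg, Polynomial.hom_eval₂, hcomp, Polynomial.comp, Polynomial.eval₂_map]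
    have h4 := Polynomial.natDegree_comp (p := u.map (Polynomial.C : K →+* Polynomial K))
      (q := ψ g)
    rw [← h3, hψF, Polynomial.natDegree_map_eq_of_injective Polynomial.C_injective] at h4
    have h5 := Nat.eq_one_of_mul_eq_one_right h4.symm
    omega

/-- Decomposability of `f(t + αx, x)` over the algebraic closure of `F_p(α,t)`. -/
lemma schinzel_decomposable (p : ℕ) [hp : Fact p.Prime] :
    (∃ u g : Polynomial (FpAlphaTClosure p),
        2 ≤ u.natDegree ∧ 2 ≤ g.natDegree ∧ substFp p (schinzelExample p) = u.comp g) := by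
  have hp0 : p ≠ 0 := hp.out.ne_zero
  have hp1 : p ≠ 1 := hp.out.ne_one
  have hp2 : 2 ≤ p := hp.out.two_le
  set L := FpAlphaTClosure p
  haveI hch1 : CharP (FractionRing (MvPolynomial Bool (ZMod p))) p :=
    charP_of_injective_ringHom
      (IsFractionRing.injective (MvPolynomial Bool (ZMod p))
        (FractionRing (MvPolynomial Bool (ZMod p)))) p
  haveI hch : CharP L p :=
    charP_of_injective_ringHom
      (algebraMap (FractionRing (MvPolynomial Bool (ZMod p))) L).injective p
  set α' : L := toFpAlphaTClosure p (MvPolynomial.X false) with hα'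
  set t' : L := toFpAlphaTClosure p (MvPolynomial.X true) with ht'
  -- find `b` with `b^(p+1) - b + α' = 0`
  set q : Polynomial L := Polynomial.X ^ (p + 1) - Polynomial.X + Polynomial.C α' with hq
  have hqdeg : q.natDegree = p + 1 := by
    have hre : q = Polynomial.X ^ (p + 1) + (Polynomial.C α' - Polynomial.X) := by
      rw [hq]; ring
    rw [hre, Polynomial.natDegree_add_eq_left_of_natDegree_lt, Polynomial.natDegree_X_pow]
    rw [Polynomial.natDegree_X_pow]
    calc (Polynomial.C α' - Polynomial.X).natDegree
        ≤ max (Polynomial.C α').natDegree (Polynomial.X : Polynomial L).natDegree :=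
          Polynomial.natDegree_sub_le _ _
      _ < p + 1 := by simp [Polynomial.natDegree_C, Polynomial.natDegree_X]; omega
  have hqne : q ≠ 0 := by
    intro h0
    rw [h0, Polynomial.natDegree_zero] at hqdeg
    omega
  obtain ⟨b, hb⟩ := IsAlgClosed.exists_root q (by
    rw [Polynomial.degree_eq_natDegree hqne, hqdeg]
    exact_mod_cast Nat.succ_ne_zero p)
  have hbeq : b ^ (p + 1) - b + α' = 0 := by
    simpa [hq] using hb
  set a : L := 1 - b ^ p with ha
  have hab : a + b ^ p = 1 := by rw [ha]; ring
  have hmul : a * b = α' := by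
    rw [ha]; linear_combination (-1 : L) * hbeq
  refine ⟨Polynomial.X ^ p + Polynomial.C a * Polynomial.X + Polynomial.C t',
    Polynomial.X ^ p + Polynomial.C b * Polynomial.X, ?_, ?_, ?_⟩
  · refine le_trans hp2 (Polynomial.le_natDegree_of_ne_zero ?_)
    simp [Polynomial.coeff_X_pow, Polynomial.coeff_X, Polynomial.coeff_C, hp0, hp1]
    rw [if_neg (fun h : (1 : ℕ) = p => hp1 h.symm)]
    simp
  · refine le_trans hp2 (Polynomial.le_natDegree_of_ne_zero ?_)
    simp [Polynomial.coeff_X_pow, Polynomial.coeff_X, Polynomial.coeff_C, hp0, hp1]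
    rw [if_neg (fun h : (1 : ℕ) = p => hp1 h.symm)]
    simp
  · have hcomp : (Polynomial.X ^ p + Polynomial.C a * Polynomial.X + Polynomial.C t').comp
        (Polynomial.X ^ p + Polynomial.C b * Polynomial.X)
        = Polynomial.X ^ p ^ 2 + Polynomial.X ^ p + Polynomial.C t'
          + Polynomial.C α' * Polynomial.X := by
      simp only [Polynomial.add_comp, Polynomial.pow_comp, Polynomial.X_comp,
        Polynomial.mul_comp, Polynomial.C_comp]
      exact key_identity (Polynomial.C a) (Polynomial.C b) (Polynomial.C α') Polynomial.X
        (Polynomial.C t')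
        (by rw [← Polynomial.C_pow, ← Polynomial.C_add, hab, Polynomial.C_1])
        (by rw [← Polynomial.C_mul, hmul])
    rw [hcomp]
    simp only [substFp, schinzelExample, MvPolynomial.eval₂_add, MvPolynomial.eval₂_pow,
      MvPolynomial.eval₂_X]
    ring

/-- **Counterexample in characteristic `p`.** Let `p` be prime, `k` a field of characteristic
`p`, and `a, b, α ∈ k` with `a + b^p = 1` and `a·b = α`. Then in `k[t,x]` one has
`(x^p + bx)^p + a(x^p + bx) + t = x^{p²} + x^p + t + αx`. Consequently, for
`f(t,x) = x^{p²} + x^p + t ∈ F_p[t,x]`, which is indecomposable in `F̄_p[t,x]`, the polynomial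
`f(t + αx, x) = x^{p²} + x^p + t + αx` is decomposable in `\overline{F_p(α,t)}[x]`. -/
theorem char_p_counterexample (p : ℕ) [Fact p.Prime]
    (k : Type*) [Field k] [CharP k p] (a b α : k)
    (hab : a + b ^ p = 1) (hmul : a * b = α) :
    ((MvPolynomial.X true ^ p + MvPolynomial.C b * MvPolynomial.X true) ^ p +
        MvPolynomial.C a *
          (MvPolynomial.X true ^ p + MvPolynomial.C b * MvPolynomial.X true) +
        MvPolynomial.X false =
      MvPolynomial.X true ^ (p ^ 2) + MvPolynomial.X true ^ p + MvPolynomial.X false +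
        MvPolynomial.C α * MvPolynomial.X (true : Bool) ) ∧
    MvIndecomposable
      (MvPolynomial.map (algebraMap (ZMod p) (AlgebraicClosure (ZMod p)))
        (schinzelExample p)) ∧
    (∃ u g : Polynomial (FpAlphaTClosure p),
        2 ≤ u.natDegree ∧ 2 ≤ g.natDegree ∧ substFp p (schinzelExample p) = u.comp g) := by
  refine ⟨?_, schinzel_indecomposable p, schinzel_decomposable p⟩
  exact key_identity (MvPolynomial.C a) (MvPolynomial.C b) (MvPolynomial.C α)
    (MvPolynomial.X true) (MvPolynomial.X false)
    (by rw [← map_pow, ← map_add, hab, map_one])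
    (by rw [← map_mul, hmul])
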